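/- For n > 4, the clique number of the commuting graph Δ(B_n) is n²/4 if n is even and (n² − 1)/4 if n is odd; equivalently, ω(Δ(B_n)) = ⌊n²/4⌋. -/

import Mathlib

/-!
Distinct `(i,j)` and `(k,l)` commute iff both products vanish, i.e. `j ≠ k` and `l ≠ i`.
In a clique `K`, let `s` and `t` be the sets of first and second coordinates. An off-diagonal
`(i,j) ∈ K` has `i ∈ s \ t` and `j ∈ t \ s`, since another element ending in `i` or starting
at `j` would multiply with it nontrivially; a diagonal `(i,i)` has `i ∈ s ∩ t`. Hence
`|K| ≤ d + ab` with `d + a + b = |s ∪ t| ≤ n`, and `d + ab ≤ n²/4` once `n ≥ 4`.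
The bound is attained by `{(i,j) | i < n/2 ≤ j}`.
-/

/-- Multiplication of nonzero elements of the Brandt semigroup `B_n`:
`(i,j)·(k,l) = (i,l)` if `j = k`, and `0` (here `none`) otherwise. -/
def brandtMul {n : ℕ} (x y : Fin n × Fin n) : Option (Fin n × Fin n) :=
  if x.2 = y.1 then some (x.1, y.2) else none

/-- The commuting graph of the Brandt semigroup `B_n`. -/
def brandtGraph (n : ℕ) : SimpleGraph (Fin n × Fin n) where
  Adj x y := x ≠ y ∧ brandtMul x y = brandtMul y x
  symm := by constructor; intro x y h; exact ⟨h.1.symm, h.2.symm⟩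
  loopless := by constructor; intro x h; exact h.1 rfl

instance {n : ℕ} : DecidableRel (brandtGraph n).Adj :=
  fun x y => decidable_of_iff (x ≠ y ∧ brandtMul x y = brandtMul y x) Iff.rfl

open Finset

theorem Nat.add_mul_le_sq_div_four {d a b n : ℕ} (hn : 4 ≤ n) (h : d + a + b ≤ n) :
    d + a * b ≤ n ^ 2 / 4 := by
  rw [Nat.le_div_iff_mul_le four_pos]
  nlinarith [sq_nonneg ((a : ℤ) - b), Nat.zero_le d]

theorem Nat.div_two_mul_sub_div_two (n : ℕ) : n / 2 * (n - n / 2) = n ^ 2 / 4 := by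
  rcases Nat.even_or_odd' n with ⟨k, rfl | rfl⟩
  · rw [show 2 * k / 2 = k by omega, show 2 * k - k = k by omega,
      show (2 * k) ^ 2 = k * k * 4 by ring]
    omega
  · rw [show (2 * k + 1) / 2 = k by omega, show 2 * k + 1 - k = k + 1 by omega,
      show (2 * k + 1) ^ 2 = k * (k + 1) * 4 + 1 by ring]
    omega

section PairsWithoutChains

variable {α : Type*} [DecidableEq α]

theorem Finset.exists_card_le_add_mul_of_snd_ne_fst {S : Finset (α × α)}
    (hS : ∀ x ∈ S, ∀ y ∈ S, x ≠ y → x.2 ≠ y.1) :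
    ∃ d a b : ℕ, d + a + b = #(S.image Prod.fst ∪ S.image Prod.snd) ∧ #S ≤ d + a * b := by
  set s := S.image Prod.fst
  set t := S.image Prod.snd
  have hoff : ∀ x ∈ S, x.1 ≠ x.2 → x.1 ∈ s \ t ∧ x.2 ∈ t \ s := by
    intro x hx hne
    refine ⟨mem_sdiff.2 ⟨mem_image_of_mem _ hx, fun h => ?_⟩,
      mem_sdiff.2 ⟨mem_image_of_mem _ hx, fun h => ?_⟩⟩
    · obtain ⟨y, hy, hyx⟩ := mem_image.1 h
      exact hS y hy x hx (by rintro rfl; exact hne hyx.symm) hyx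
    · obtain ⟨y, hy, hyx⟩ := mem_image.1 h
      exact hS x hx y hy (by rintro rfl; exact hne hyx) hyx.symm
  have hsub : S ⊆ (s ∩ t).image (fun i => (i, i)) ∪ (s \ t) ×ˢ (t \ s) := by
    intro x hx
    by_cases hdiag : x.1 = x.2
    · refine mem_union_left _ (mem_image.2 ⟨x.1, mem_inter.2 ⟨mem_image_of_mem _ hx, ?_⟩, ?_⟩)
      · exact hdiag ▸ mem_image_of_mem _ hx
      · exact Prod.ext rfl hdiag
    · exact mem_union_right _ (mem_product.2 (hoff x hx hdiag))
  refine ⟨#(s ∩ t), #(s \ t), #(t \ s), ?_, ?_⟩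
  · rw [add_comm #(s ∩ t), card_sdiff_add_card_inter, add_comm, card_sdiff_add_card, union_comm]
  · calc #S ≤ #((s ∩ t).image (fun i => (i, i)) ∪ (s \ t) ×ˢ (t \ s)) := card_le_card hsub
      _ ≤ #(s ∩ t) + #(s \ t) * #(t \ s) := by
        grw [card_union_le, card_image_le, card_product]

theorem Finset.card_le_sq_div_four_of_snd_ne_fst [Fintype α] (hα : 4 ≤ Fintype.card α)
    {S : Finset (α × α)} (hS : ∀ x ∈ S, ∀ y ∈ S, x ≠ y → x.2 ≠ y.1) :
    #S ≤ Fintype.card α ^ 2 / 4 := by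
  obtain ⟨d, a, b, hdab, hS⟩ := exists_card_le_add_mul_of_snd_ne_fst hS
  exact hS.trans (Nat.add_mul_le_sq_div_four hα (hdab.trans_le (card_le_univ _)))

end PairsWithoutChains

theorem brandtGraph_adj_iff {n : ℕ} {x y : Fin n × Fin n} :
    (brandtGraph n).Adj x y ↔ x ≠ y ∧ x.2 ≠ y.1 ∧ y.2 ≠ x.1 := by
  simp only [brandtGraph, brandtMul]
  split_ifs <;> simp_all [Prod.ext_iff]

theorem brandtGraph_isClique_Iio_prod_Ici {n : ℕ} (m : Fin n) :
    (brandtGraph n).IsClique ↑(Iio m ×ˢ Ici m) := by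
  intro x hx y hy hxy
  simp only [coe_product, Set.mem_prod, mem_coe, mem_Iio, mem_Ici] at hx hy
  exact brandtGraph_adj_iff.2 ⟨hxy, (hy.1.trans_le hx.2).ne', (hx.1.trans_le hy.2).ne'⟩

theorem brandt_clique_number_large (n : ℕ) (hn : 4 < n) :
    (∃ K : Set (Fin n × Fin n), (brandtGraph n).IsClique K ∧ K.ncard = n ^ 2 / 4) ∧
    ∀ K : Set (Fin n × Fin n), (brandtGraph n).IsClique K → K.ncard ≤ n ^ 2 / 4 := by
  refine ⟨⟨_, brandtGraph_isClique_Iio_prod_Ici ⟨n / 2, by omega⟩, ?_⟩, fun K hK => ?_⟩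
  · rw [Set.ncard_coe_finset, card_product, Fin.card_Iio, Fin.card_Ici]
    exact Nat.div_two_mul_sub_div_two n
  · classical
    calc K.ncard = #K.toFinset := Set.ncard_eq_toFinset_card' K
      _ ≤ Fintype.card (Fin n) ^ 2 / 4 := by
        refine card_le_sq_div_four_of_snd_ne_fst (by rw [Fintype.card_fin]; omega)
          fun x hx y hy hxy => ?_
        rw [Set.mem_toFinset] at hx hy
        exact (brandtGraph_adj_iff.1 (hK hx hy hxy)).2.1
      _ = n ^ 2 / 4 := by rw [Fintype.card_fin]
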